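/- For every modulus κ with 0 < κ < 1, the function dn₂ : ℝ → ℝ defined by dn₂ = cos ∘ ψ satisfies dn₂(0) = 1 and the differential equation (dn₂'(u))² = 2·(1 − dn₂(u))·(dn₂(u)² − λ²) for all real u, where λ = √(1 − κ²). -/

import Mathlib

/-!
By Legendre's duplication `(2a)_{2n} = 4ⁿ (a)_n (a + 1/2)_n`, the coefficients of
`F(a, a + 1/2; 1/2; ·)` are the even-index coefficients of the binomial series of `(1 - x)^(-2a)`,
so `F(1/4, 3/4; 1/2; s²) = ((1 - s)^(-1/2) + (1 + s)^(-1/2)) / 2`. As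
`√(1 + s) + √(1 - s) = 2 cos (ψ/2)` and `√(1 + s) √(1 - s) = cos ψ` for `ψ = arcsin s`, this is
`cos (ψ/2) / cos ψ`. Hence `G` has a positive derivative, its inverse `φ` satisfies
`φ' = cos ψ / cos (ψ/2)`, and the chain rule gives `(cos ψ)' = -2κ cos φ sin (ψ/2)`, whose square is
`2 (1 - cos ψ) κ² cos² φ = 2 (1 - cos ψ) (cos² ψ - λ²)`.
-/

open Real

/-- The Gauss hypergeometric series `F(a, b; c; x)` with real parameters. -/
noncomputable def hyperF (a b c x : ℝ) : ℝ :=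
  ∑' n : ℕ, (Polynomial.eval a (ascPochhammer ℝ n) * Polynomial.eval b (ascPochhammer ℝ n) /
      (Polynomial.eval c (ascPochhammer ℝ n) * (Nat.factorial n : ℝ))) * x ^ n

/-- `G κ T = ∫₀^T F(1/4, 3/4; 1/2; κ² sin² t) dt`. -/
noncomputable def G (κ T : ℝ) : ℝ :=
  ∫ t in (0:ℝ)..T, hyperF (1/4) (3/4) (1/2) (κ ^ 2 * Real.sin t ^ 2)

/-- The complete integral `K = G κ (π/2)`. -/
noncomputable def K (κ : ℝ) : ℝ := G κ (Real.pi / 2)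

/-- The auxiliary function `ψ = arcsin (κ sin φ)`. -/
noncomputable def psi (κ : ℝ) (φ : ℝ → ℝ) (u : ℝ) : ℝ :=
  Real.arcsin (κ * Real.sin (φ u))

/-- The root function `rn = sin (ψ/2)`. -/
noncomputable def rn (κ : ℝ) (φ : ℝ → ℝ) (u : ℝ) : ℝ :=
  Real.sin (psi κ φ u / 2)

theorem choose_add_sub_one_eq_ascPochhammer_div_factorial (a : ℝ) (n : ℕ) :
    Ring.choose (a + n - 1) n = (ascPochhammer ℝ n).eval a / n.factorial := by
  rw [← Ring.multichoose_eq, eq_div_iff (by positivity), ← Polynomial.ascPochhammer_smeval_eq_eval,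
    ← Ring.factorial_nsmul_multichoose_eq_ascPochhammer, nsmul_eq_mul, mul_comm]

theorem hasSum_ascPochhammer_div_factorial_mul_pow (a : ℝ) {x : ℝ} (hx : |x| < 1) :
    HasSum (fun n : ℕ => (ascPochhammer ℝ n).eval a / n.factorial * x ^ n) ((1 - x) ^ a)⁻¹ := by
  have := (one_div_one_sub_rpow_hasFPowerSeriesOnBall_zero a).hasSum
    (y := x) (by simpa [enorm_eq_nnnorm, ← NNReal.coe_lt_coe] using hx)
  simpa [FormalMultilinearSeries.ofScalars_apply_eq,
    choose_add_sub_one_eq_ascPochhammer_div_factorial, mul_comm] using this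

theorem ascPochhammer_eval_two_mul (a : ℝ) (n : ℕ) :
    (ascPochhammer ℝ (2 * n)).eval (2 * a) =
      4 ^ n * (ascPochhammer ℝ n).eval a * (ascPochhammer ℝ n).eval (a + 1 / 2) := by
  induction n with
  | zero => simp
  | succ n ih =>
    rw [show 2 * (n + 1) = 2 * n + 1 + 1 by ring, ascPochhammer_succ_eval, ascPochhammer_succ_eval,
      ih, ascPochhammer_succ_eval, ascPochhammer_succ_eval]
    push_cast
    ring

theorem ascPochhammer_eval_mul_eval_add_half_div_eq (a : ℝ) (n : ℕ) :
    (ascPochhammer ℝ n).eval a * (ascPochhammer ℝ n).eval (a + 1 / 2) /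
        ((ascPochhammer ℝ n).eval (1 / 2) * n.factorial) =
      (ascPochhammer ℝ (2 * n)).eval (2 * a) / (2 * n).factorial := by
  have hfac := ascPochhammer_eval_two_mul (1 / 2) n
  rw [show 2 * (1 / 2 : ℝ) = 1 by norm_num, ascPochhammer_eval_one,
    show (1 / 2 + 1 / 2 : ℝ) = 1 by norm_num, ascPochhammer_eval_one] at hfac
  have hpos : 0 < (ascPochhammer ℝ n).eval (1 / 2 : ℝ) := ascPochhammer_pos n _ (by norm_num)
  rw [hfac, ascPochhammer_eval_two_mul]
  field_simp

theorem hyperF_add_half_half_sq (a : ℝ) {x : ℝ} (hx : |x| < 1) :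
    hyperF a (a + 1 / 2) (1 / 2) (x ^ 2) = (((1 - x) ^ (2 * a))⁻¹ + ((1 + x) ^ (2 * a))⁻¹) / 2 := by
  have hsum := ((hasSum_ascPochhammer_div_factorial_mul_pow (2 * a) hx).add
    (sub_neg_eq_add 1 x ▸ hasSum_ascPochhammer_div_factorial_mul_pow (2 * a)
      (x := -x) (by rwa [abs_neg]))).div_const 2
  have heven := ((mul_right_injective₀ (two_ne_zero' ℕ)).hasSum_iff fun m hm => by
    have hodd : Odd m := Nat.not_even_iff_odd.1 fun ⟨r, hr⟩ => hm ⟨r, by simp [hr, two_mul]⟩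
    simp [hodd.neg_pow]).2 hsum
  refine (heven.congr_fun fun k => ?_).tsum_eq
  simp only [Function.comp, (even_two_mul k).neg_pow, pow_mul,
    ascPochhammer_eval_mul_eval_add_half_div_eq]
  ring

theorem cos_arcsin_div_two_pos (x : ℝ) : 0 < cos (arcsin x / 2) := by
  have := arcsin_mem_Icc x
  exact cos_pos_of_mem_Ioo ⟨by linarith [this.1, pi_pos], by linarith [this.2, pi_pos]⟩

theorem sqrt_one_add_mul_sqrt_one_sub {s : ℝ} (hs : -1 ≤ s) :
    √(1 + s) * √(1 - s) = cos (arcsin s) := by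
  rw [cos_arcsin, ← sqrt_mul (by linarith)]
  ring_nf

theorem sqrt_one_add_add_sqrt_one_sub {s : ℝ} (hs : |s| ≤ 1) :
    √(1 + s) + √(1 - s) = 2 * cos (arcsin s / 2) := by
  obtain ⟨hs₁, hs₂⟩ := abs_le.1 hs
  refine (pow_left_inj₀ (by positivity) (by linarith [cos_arcsin_div_two_pos s]) two_ne_zero).1 ?_
  calc (√(1 + s) + √(1 - s)) ^ 2
      = √(1 + s) ^ 2 + √(1 - s) ^ 2 + 2 * (√(1 + s) * √(1 - s)) := by ring
    _ = 2 + 2 * cos (2 * (arcsin s / 2)) := by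
      rw [sq_sqrt (by linarith), sq_sqrt (by linarith), sqrt_one_add_mul_sqrt_one_sub hs₁,
        mul_div_cancel₀ _ two_ne_zero]
      ring
    _ = (2 * cos (arcsin s / 2)) ^ 2 := by rw [cos_two_mul]; ring

theorem hyperF_quarter_threeQuarter_half_sq {s : ℝ} (hs : |s| < 1) :
    hyperF (1 / 4) (3 / 4) (1 / 2) (s ^ 2) = cos (arcsin s / 2) / cos (arcsin s) := by
  obtain ⟨hs₁, hs₂⟩ := abs_lt.1 hs
  have h := hyperF_add_half_half_sq (1 / 4) hs
  rw [show (1 / 4 + 1 / 2 : ℝ) = 3 / 4 by norm_num, show (2 * (1 / 4) : ℝ) = 1 / 2 by norm_num,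
    ← sqrt_eq_rpow, ← sqrt_eq_rpow] at h
  have hp : 0 < √(1 + s) := sqrt_pos.2 (by linarith)
  have hq : 0 < √(1 - s) := sqrt_pos.2 (by linarith)
  have hsum := sqrt_one_add_add_sqrt_one_sub hs.le
  rw [h, ← sqrt_one_add_mul_sqrt_one_sub hs₁.le]
  field_simp
  linear_combination hsum

theorem cos_arcsin_pos {x : ℝ} (hx : |x| < 1) : 0 < cos (arcsin x) := by
  rw [cos_arcsin]
  exact sqrt_pos.2 (sub_pos.2 (sq_lt_one_iff_abs_lt_one x |>.2 hx))

theorem abs_mul_sin_lt_one {κ : ℝ} (hκ : |κ| < 1) (t : ℝ) : |κ * sin t| < 1 := by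
  rw [abs_mul]
  exact (mul_le_of_le_one_right (abs_nonneg κ) (abs_sin_le_one t)).trans_lt hκ

theorem hasDerivAt_G {κ : ℝ} (hκ : |κ| < 1) (T : ℝ) :
    HasDerivAt (G κ) (cos (arcsin (κ * sin T) / 2) / cos (arcsin (κ * sin T))) T := by
  have hcont : Continuous fun t => cos (arcsin (κ * sin t) / 2) / cos (arcsin (κ * sin t)) :=
    Continuous.div (by fun_prop) (by fun_prop) fun t =>
      (cos_arcsin_pos (abs_mul_sin_lt_one hκ t)).ne'
  have hG : G κ = fun T => ∫ t in (0 : ℝ)..T,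
      cos (arcsin (κ * sin t) / 2) / cos (arcsin (κ * sin t)) :=
    funext fun T => intervalIntegral.integral_congr fun t _ => by
      simp only [← hyperF_quarter_threeQuarter_half_sq (abs_mul_sin_lt_one hκ t), mul_pow]
  rw [hG]
  exact (hcont.integral_hasStrictDerivAt 0 T).hasDerivAt

theorem hasDerivAt_inverse_of_hasDerivAt_pos {f g f' : ℝ → ℝ} (hf : ∀ x, HasDerivAt f (f' x) x)
    (hf' : ∀ x, 0 < f' x) (hgf : Function.LeftInverse g f) (hfg : Function.RightInverse g f)
    (y : ℝ) : HasDerivAt g (f' (g y))⁻¹ y := by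
  have hmono := strictMono_of_hasDerivAt_pos hf hf'
  have hg : Continuous g := Monotone.continuous_of_surjective
    (fun a b hab => hmono.le_iff_le.1 (by rwa [hfg a, hfg b])) hgf.surjective
  exact (hf (g y)).of_local_left_inverse hg.continuousAt (hf' _).ne' (.of_forall hfg)

theorem hasDerivAt_cos_psi {κ : ℝ} {φ : ℝ → ℝ} {u : ℝ} (hκ : |κ| < 1)
    (hφ : HasDerivAt φ (cos (psi κ φ u) / cos (psi κ φ u / 2)) u) :
    HasDerivAt (cos ∘ psi κ φ) (-2 * κ * cos (φ u) * sin (psi κ φ u / 2)) u := by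
  have hlt := abs_mul_sin_lt_one hκ (φ u)
  obtain ⟨h₁, h₂⟩ := abs_lt.1 hlt
  have hpsi := (hasDerivAt_arcsin h₁.ne' h₂.ne).comp u
    (((hasDerivAt_sin (φ u)).comp u hφ).const_mul κ)
  refine ((hasDerivAt_cos (psi κ φ u)).comp u hpsi).congr_deriv ?_
  unfold psi
  set ψ := arcsin (κ * sin (φ u)) with hψ
  have hc : 0 < cos ψ := cos_arcsin_pos hlt
  have hc₂ : 0 < cos (ψ / 2) := cos_arcsin_div_two_pos _
  have hsin : sin ψ = 2 * sin (ψ / 2) * cos (ψ / 2) := by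
    rw [← sin_two_mul, mul_div_cancel₀ _ two_ne_zero]
  rw [← cos_arcsin, ← hψ, hsin]
  field_simp

theorem neg_two_mul_cos_mul_sin_half_arcsin_sq {κ : ℝ} (hκ : |κ| ≤ 1) (t : ℝ) :
    (-2 * κ * cos t * sin (arcsin (κ * sin t) / 2)) ^ 2 =
      2 * (1 - cos (arcsin (κ * sin t))) * (cos (arcsin (κ * sin t)) ^ 2 - √(1 - κ ^ 2) ^ 2) := by
  have hle : |κ * sin t| ≤ 1 := by
    rw [abs_mul]
    exact mul_le_one₀ hκ (abs_nonneg _) (abs_sin_le_one t)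
  set ψ := arcsin (κ * sin t)
  have hsinψ : sin ψ = κ * sin t := sin_arcsin (abs_le.1 hle).1 (abs_le.1 hle).2
  have hhalf : sin (ψ / 2) ^ 2 = 1 / 2 - cos ψ / 2 := by
    rw [sin_sq_eq_half_sub, mul_div_cancel₀ _ two_ne_zero]
  have hsqrt : √(1 - κ ^ 2) ^ 2 = 1 - κ ^ 2 :=
    sq_sqrt (sub_nonneg.2 (sq_le_one_iff_abs_le_one κ |>.2 hκ))
  rw [hsqrt, cos_sq' ψ, hsinψ]
  linear_combination (4 * κ ^ 2 * cos t ^ 2) * hhalf + 2 * κ ^ 2 * (1 - cos ψ) * sin_sq_add_cos_sq t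

theorem stmt12 (κ : ℝ) (hκ₀ : 0 < κ) (hκ₁ : κ < 1)
    (φ : ℝ → ℝ) (hφ₁ : Function.LeftInverse φ (G κ))
    (hφ₂ : Function.RightInverse φ (G κ)) :
    (Real.cos ∘ psi κ φ) 0 = 1 ∧
      ∀ u : ℝ, (deriv (Real.cos ∘ psi κ φ) u) ^ 2 =
        2 * (1 - (Real.cos ∘ psi κ φ) u) *
          (((Real.cos ∘ psi κ φ) u) ^ 2 - (Real.sqrt (1 - κ ^ 2)) ^ 2) := by
  have hκ : |κ| < 1 := abs_lt.2 ⟨by linarith, hκ₁⟩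
  have hφ' (u : ℝ) : HasDerivAt φ (cos (psi κ φ u) / cos (psi κ φ u / 2)) u := by
    have := hasDerivAt_inverse_of_hasDerivAt_pos (hasDerivAt_G hκ)
      (fun T => div_pos (cos_arcsin_div_two_pos _) (cos_arcsin_pos (abs_mul_sin_lt_one hκ T)))
      hφ₁ hφ₂ u
    rwa [inv_div] at this
  refine ⟨?_, fun u => ?_⟩
  · have hφ₀ : φ 0 = 0 := by simpa [G] using hφ₁ 0
    simp [psi, hφ₀]
  · rw [(hasDerivAt_cos_psi hκ (hφ' u)).deriv]
    exact neg_two_mul_cos_mul_sin_half_arcsin_sq hκ.le (φ u)
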